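/- Let C be a linear code of length n over a finite commutative Frobenius ring R. Define I = (I_0, …, I_t) and J = (J_0, …, J_t) by I_i = {j ∈ {0,…,t} : a_j a_k ≠ 0 for all k such that a_i a_k ≠ 0} and J_i = {j ∈ {0,…,t} : a_kR ⊄ a_jR for all k such that a_i a_k ≠ 0}. Then for every submultiset X of t·[n], B^I_{C⊥}(X) = (1/|C|) · (∏_{i=0}^t |a_iR|^{|M_i(X)|}) · B^J_C(X). -/

import Mathlib

noncomputable section
open scoped BigOperators

/-- The dual of a linear code `C ⊆ Rⁿ` with respect to the standard inner
product `u·v = ∑ ℓ, u ℓ * v ℓ`. -/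
def dualCode {R : Type*} [CommRing R] {n : ℕ} (C : Submodule R (Fin n → R)) :
    Submodule R (Fin n → R) where
  carrier := {v | ∀ u ∈ C, ∑ ℓ, u ℓ * v ℓ = 0}
  add_mem' := by
    intro v w hv hw u hu
    simp only [Set.mem_setOf_eq] at *
    have h1 := hv u hu
    have h2 := hw u hu
    simp only [Pi.add_apply, mul_add, Finset.sum_add_distrib, h1, h2, add_zero]
  zero_mem' := by
    intro u hu
    simp
  smul_mem' := by
    intro c v hv u hu
    simp only [Set.mem_setOf_eq] at *
    have h := hv u hu
    have : ∑ ℓ, u ℓ * (c • v) ℓ = c * ∑ ℓ, u ℓ * v ℓ := by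
      rw [Finset.mul_sum]
      exact Finset.sum_congr rfl fun ℓ _ => by
        simp only [Pi.smul_apply, smul_eq_mul]; ring
    rw [this, h, mul_zero]

/-- A finite commutative ring is Frobenius iff `|C|·|C⊥| = |R|ⁿ` for every
linear code `C` of every length `n` over `R`. -/
def IsFrobeniusRing (R : Type*) [CommRing R] [Fintype R] : Prop :=
  ∀ (n : ℕ) (C : Submodule R (Fin n → R)),
    Nat.card C * Nat.card (dualCode C) = Fintype.card R ^ n

open Classical

/-- For a tuple `F = (F₀, …, F_t)` of subsets of `{0, …, t}` and a submultiset
`X ⊆ t·[n]` (identified with its multiplicity function `m : [n] → {0, …, t}`),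
`B^F_C(X) = |{c ∈ C : S_i(c) ⊆ ∪_{j ∈ F_i} M_j(X) for all i}|`. -/
def BF {R : Type*} [CommRing R] {t n : ℕ} (a : Fin (t + 1) → R)
    (C : Submodule R (Fin n → R)) (F : Fin (t + 1) → Set (Fin (t + 1)))
    (m : Fin n → Fin (t + 1)) : ℕ :=
  Nat.card {c : C // ∀ (i : Fin (t + 1)) (ℓ : Fin n),
    Ideal.span {(c : Fin n → R) ℓ} = Ideal.span {a i} → m ℓ ∈ F i}

/-! With `D = ∏ ℓ Ann(a_{m ℓ}) ⊆ Rⁿ`, the `J`-condition on a word says exactly that it lies in `D`,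
and, since every element of `R` is associate to some `a_i`, the `I`-condition says exactly that it
lies in `D⊥`. Hence `B^J_C(X) = |C ∩ D|` and `B^I_{C⊥}(X) = |C⊥ ∩ D⊥| = |(C + D)⊥|`. The Frobenius
property gives `|(C + D)⊥| = |R|ⁿ / |C + D| = |R|ⁿ |C ∩ D| / (|C| |D|)`, while
`|D| = ∏ ℓ |R| / |a_{m ℓ} R|`. -/

section

variable {R : Type*} [CommRing R]

theorem Submodule.card_sup_mul_card_inf {M : Type*} [AddCommGroup M] [Module R M] [Finite M]
    (p q : Submodule R M) :
    Nat.card ↥(p ⊔ q) * Nat.card ↥(p ⊓ q) = Nat.card p * Nat.card q := by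
  have hp := card_eq_card_quotient_mul_card (comap p.subtype (p ⊓ q))
  have hs := card_eq_card_quotient_mul_card (comap (p ⊔ q).subtype q)
  rw [Nat.card_congr (comapSubtypeEquivOfLe inf_le_left).toEquiv, comap_inf,
    Nat.card_congr (LinearMap.quotientInfEquivSupQuotient p q).toEquiv] at hp
  rw [Nat.card_congr (comapSubtypeEquivOfLe le_sup_right).toEquiv] at hs
  rw [hp, hs]
  ring

theorem Fintype.prod_comp_eq_prod_pow_card {ι κ M : Type*} [Fintype ι] [Fintype κ]
    [DecidableEq κ] [CommMonoid M] (g : ι → κ) (f : κ → M) :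
    ∏ i, f (g i) = ∏ j, f j ^ Nat.card {i // g i = j} := by
  simp [← Fintype.prod_fiberwise' g f, Nat.card_eq_fintype_card]

theorem card_torsionOf_mul_card_span_singleton [Fintype R] (b : R) :
    Nat.card (Ideal.torsionOf R R b) * Nat.card (Ideal.span {b}) = Fintype.card R := by
  rw [← Nat.card_congr (Ideal.quotTorsionOfEquivSpanSingleton R R b).toEquiv,
    ← Submodule.card_eq_card_quotient_mul_card, Nat.card_eq_fintype_card]

section Codes

variable {n : ℕ}

theorem dualCode_sup (C D : Submodule R (Fin n → R)) :
    dualCode (C ⊔ D) = dualCode C ⊓ dualCode D := by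
  ext v
  refine ⟨fun h => ⟨fun u hu => h u (Submodule.mem_sup_left hu),
    fun u hu => h u (Submodule.mem_sup_right hu)⟩, ?_⟩
  rintro ⟨hC, hD⟩ u hu
  obtain ⟨c, hc, d, hd, rfl⟩ := Submodule.mem_sup.mp hu
  simp only [Pi.add_apply, add_mul, Finset.sum_add_distrib, hC c hc, hD d hd, add_zero]

theorem IsFrobeniusRing.card_mul_card_mul_card_dualCode_sup [Fintype R] (hR : IsFrobeniusRing R)
    (C D : Submodule R (Fin n → R)) :
    Nat.card C * Nat.card D * Nat.card (dualCode (C ⊔ D)) =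
      Fintype.card R ^ n * Nat.card ↥(C ⊓ D) := by
  rw [← C.card_sup_mul_card_inf D, ← hR n (C ⊔ D)]
  ring

def annihilatorCode (b : Fin n → R) : Submodule R (Fin n → R) :=
  Submodule.pi Set.univ fun ℓ => Ideal.torsionOf R R (b ℓ)

theorem mem_annihilatorCode {b v : Fin n → R} :
    v ∈ annihilatorCode b ↔ ∀ ℓ, v ℓ * b ℓ = 0 := by
  simp [annihilatorCode, Submodule.mem_pi, Ideal.mem_torsionOf_iff]

theorem mem_dualCode_annihilatorCode {b v : Fin n → R} :
    v ∈ dualCode (annihilatorCode b) ↔ ∀ ℓ s, s * b ℓ = 0 → s * v ℓ = 0 := by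
  refine ⟨fun hv ℓ s hs => ?_, fun h u hu => ?_⟩
  · have hsingle : Pi.single ℓ s ∈ annihilatorCode b := by
      rw [mem_annihilatorCode]
      intro ℓ'
      rcases eq_or_ne ℓ' ℓ with rfl | hne
      · simpa using hs
      · simp [Pi.single_eq_of_ne hne]
    simpa [Pi.single_apply] using hv _ hsingle
  · exact Finset.sum_eq_zero fun ℓ _ => h ℓ (u ℓ) (mem_annihilatorCode.mp hu ℓ)

theorem card_annihilatorCode_mul_prod [Fintype R] (b : Fin n → R) :
    Nat.card (annihilatorCode b) * ∏ ℓ, Nat.card (Ideal.span {b ℓ}) = Fintype.card R ^ n := by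
  have hpi : Nat.card (annihilatorCode b) = ∏ ℓ, Nat.card (Ideal.torsionOf R R (b ℓ)) := by
    rw [← Nat.card_pi]
    exact Nat.card_congr
      { toFun := fun v ℓ => ⟨v.1 ℓ, (Submodule.mem_pi.mp v.2) ℓ (Set.mem_univ ℓ)⟩
        invFun := fun f => ⟨fun ℓ => f ℓ, Submodule.mem_pi.mpr fun ℓ _ => (f ℓ).2⟩ }
  rw [hpi, ← Finset.prod_mul_distrib]
  simp only [card_torsionOf_mul_card_span_singleton, Finset.prod_const, Finset.card_univ,
    Fintype.card_fin]

end Codes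

section Representatives

variable {ι : Type*} {a : ι → R}

theorem forall_span_eq_imp_iff (hrep : ∀ r : R, ∃ i, Ideal.span {r} = Ideal.span {a i})
    {P : R → Prop} (hP : ∀ x y, P x → P (x * y)) (x : R) :
    (∀ i, Ideal.span {x} = Ideal.span {a i} → P (a i)) ↔ P x := by
  refine ⟨fun h => ?_, fun hx i hi => ?_⟩
  · obtain ⟨i, hi⟩ := hrep x
    obtain ⟨u, rfl⟩ := Ideal.span_singleton_le_span_singleton.mp hi.le
    exact hP _ _ (h i hi)
  · obtain ⟨u, hu⟩ := Ideal.span_singleton_le_span_singleton.mp hi.ge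
    exact hu ▸ hP _ _ hx

theorem mem_setOf_forall_not_span_le_iff (i j : ι) :
    j ∈ {j | ∀ k, a i * a k ≠ 0 → ¬ Ideal.span {a k} ≤ Ideal.span {a j}} ↔ a i * a j = 0 := by
  refine ⟨fun h => by_contra fun hij => h j hij le_rfl, fun hij k hik hkj => hik ?_⟩
  obtain ⟨s, hs⟩ := Ideal.span_singleton_le_span_singleton.mp hkj
  rw [hs, ← mul_assoc, hij, zero_mul]

theorem mem_setOf_forall_mul_ne_zero_iff
    (hrep : ∀ r : R, ∃ i, Ideal.span {r} = Ideal.span {a i}) (i j : ι) :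
    j ∈ {j | ∀ k, a i * a k ≠ 0 → a j * a k ≠ 0} ↔ ∀ s, s * a j = 0 → s * a i = 0 := by
  refine ⟨fun h s hs => ?_, fun h k hik hjk => hik ?_⟩
  · obtain ⟨k, hk⟩ := hrep s
    obtain ⟨u, hu⟩ := Ideal.span_singleton_le_span_singleton.mp hk.le
    obtain ⟨w, hw⟩ := Ideal.span_singleton_le_span_singleton.mp hk.ge
    have hik : a i * a k = 0 := by
      by_contra hik
      exact h k hik (by rw [hw]; linear_combination w * hs)
    rw [hu]
    linear_combination u * hik
  · linear_combination h (a k) (by linear_combination hjk)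

end Representatives

section Counts

variable {t n : ℕ} (a : Fin (t + 1) → R)

theorem BF_eq_card_inf (C P : Submodule R (Fin n → R)) (F : Fin (t + 1) → Set (Fin (t + 1)))
    (m : Fin n → Fin (t + 1))
    (hP : ∀ v, (∀ i ℓ, Ideal.span {v ℓ} = Ideal.span {a i} → m ℓ ∈ F i) ↔ v ∈ P) :
    BF a C F m = Nat.card ↥(C ⊓ P) :=
  Nat.card_congr ((Equiv.subtypeSubtypeEquivSubtypeInter (· ∈ C) _).trans
    (Equiv.subtypeEquivRight fun v => and_congr_right' (hP v)))

variable {a}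

theorem BF_eq_card_inf_annihilatorCode (hrep : ∀ r : R, ∃ i, Ideal.span {r} = Ideal.span {a i})
    (C : Submodule R (Fin n → R)) (J : Fin (t + 1) → Set (Fin (t + 1)))
    (hJ : ∀ i, J i = {j | ∀ k, a i * a k ≠ 0 → ¬ Ideal.span {a k} ≤ Ideal.span {a j}})
    (m : Fin n → Fin (t + 1)) :
    BF a C J m = Nat.card ↥(C ⊓ annihilatorCode fun ℓ => a (m ℓ)) := by
  refine BF_eq_card_inf a C _ J m fun v => ?_
  simp only [hJ, mem_setOf_forall_not_span_le_iff, mem_annihilatorCode]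
  rw [forall_comm]
  exact forall_congr' fun ℓ => forall_span_eq_imp_iff hrep
    (P := fun x => x * a (m ℓ) = 0) (fun x y hx => by rw [mul_right_comm, hx, zero_mul]) (v ℓ)

theorem BF_dualCode_eq_card_dualCode_sup
    (hrep : ∀ r : R, ∃ i, Ideal.span {r} = Ideal.span {a i})
    (C : Submodule R (Fin n → R)) (I : Fin (t + 1) → Set (Fin (t + 1)))
    (hI : ∀ i, I i = {j | ∀ k, a i * a k ≠ 0 → a j * a k ≠ 0})
    (m : Fin n → Fin (t + 1)) :
    BF a (dualCode C) I m = Nat.card (dualCode (C ⊔ annihilatorCode fun ℓ => a (m ℓ))) := by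
  rw [dualCode_sup]
  refine BF_eq_card_inf a _ _ I m fun v => ?_
  simp only [hI, mem_setOf_forall_mul_ne_zero_iff hrep, mem_dualCode_annihilatorCode]
  rw [forall_comm]
  exact forall_congr' fun ℓ => forall_span_eq_imp_iff hrep
    (P := fun x => ∀ s, s * a (m ℓ) = 0 → s * x = 0)
    (fun x y hx s hs => by rw [← mul_assoc, hx s hs, zero_mul]) (v ℓ)

end Counts

end

theorem stmt6 {R : Type*} [CommRing R] [Fintype R] (hR : IsFrobeniusRing R)
    {t : ℕ} (a : Fin (t + 1) → R)
    (hrep : ∀ r : R, ∃ i, Ideal.span {r} = Ideal.span {a i})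
    {n : ℕ} (C : Submodule R (Fin n → R))
    (I J : Fin (t + 1) → Set (Fin (t + 1)))
    (hI : ∀ i, I i = {j | ∀ k, a i * a k ≠ 0 → a j * a k ≠ 0})
    (hJ : ∀ i, J i = {j | ∀ k, a i * a k ≠ 0 → ¬ Ideal.span {a k} ≤ Ideal.span {a j}}) :
    ∀ m : Fin n → Fin (t + 1),
      (BF a (dualCode C) I m : ℚ) =
        (Nat.card C : ℚ)⁻¹ *
          (∏ i : Fin (t + 1),
            (Nat.card (Ideal.span {a i}) : ℚ) ^ (Nat.card {ℓ : Fin n // m ℓ = i})) *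
          (BF a C J m : ℚ) := by
  intro m
  set D := annihilatorCode fun ℓ => a (m ℓ)
  have hcount : Nat.card C * BF a (dualCode C) I m =
      (∏ i, Nat.card (Ideal.span {a i}) ^ Nat.card {ℓ // m ℓ = i}) * BF a C J m := by
    rw [BF_dualCode_eq_card_dualCode_sup hrep C I hI m, BF_eq_card_inf_annihilatorCode hrep C J hJ m,
      ← Fintype.prod_comp_eq_prod_pow_card m]
    apply Nat.eq_of_mul_eq_mul_left (Nat.card_pos (α := D))
    calc Nat.card D * (Nat.card C * Nat.card (dualCode (C ⊔ D)))
        = Nat.card C * Nat.card D * Nat.card (dualCode (C ⊔ D)) := by ring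
      _ = Fintype.card R ^ n * Nat.card ↥(C ⊓ D) := hR.card_mul_card_mul_card_dualCode_sup C D
      _ = _ := by rw [← card_annihilatorCode_mul_prod]; ring
  have hC : (Nat.card C : ℚ) ≠ 0 := by exact_mod_cast Nat.card_pos.ne'
  rw [mul_assoc, eq_inv_mul_iff_mul_eq₀ hC]
  exact_mod_cast hcount

end
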